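/- Let (u_l)_{l≥0} be a real sequence. For all integers j ≥ 0 and n ≥ 1, the following determinant identity holds: K^{(j)}_{n+1} · H^{(j+1)}_{n−1} = H^{(j+1)}_n · K^{(j)}_n − H^{(j)}_n · K^{(j+1)}_n. -/

import Mathlib

/-!
The identity is the Desnanot–Jacobi (Dodgson condensation) identity for the `(n+1) × (n+1)` matrix
`A` of `K^{(j)}_{n+1}`. Deleting the first or last row of `A` together with its first or last
column leaves the matrices of `H^{(j+1)}_n`, `H^{(j)}_n`, `K^{(j+1)}_n` and `K^{(j)}_n`; deleting
both the first and last rows and columns leaves that of `H^{(j+1)}_{n-1}`.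

Desnanot–Jacobi follows by multiplying `A` on the left by the identity matrix with rows `a`, `b`
replaced by the rows `a`, `b` of `adj A`: the product is `A` with these rows replaced by
`det A • eₐ` and `det A • e_b`, and taking determinants gives `det A` times the identity.
-/

/-- `hankel u j n` = the Hankel determinant `H^{(j)}_n = det (u_{j+i+k})_{0 ≤ i,k ≤ n-1}`
(with `H^{(j)}_0 = 1`, the determinant of the empty matrix). -/
noncomputable def hankel (u : ℕ → ℝ) (j n : ℕ) : ℝ :=
  Matrix.det (Matrix.of fun i k : Fin n => u (j + i + k))

/-- `Kdet u j n` = the determinant `K^{(j)}_n` of the `n×n` matrix whose first row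
is `(1,…,1)` and whose `(i+1)`-th row, for `1 ≤ i ≤ n-1`, is
`(u_{j+i-1}, u_{j+i}, …, u_{j+i+n-2})` (with `K^{(j)}_0 = 1`). -/
noncomputable def Kdet (u : ℕ → ℝ) (j n : ℕ) : ℝ :=
  Matrix.det (Matrix.of fun i k : Fin n =>
    if (i : ℕ) = 0 then 1 else u (j + ((i : ℕ) - 1) + k))

open Polynomial

namespace Matrix

variable {n R : Type*} [Fintype n] [DecidableEq n] [CommRing R]

theorem det_updateRow_updateRow_one {a b : n} (hab : a ≠ b) (x y : n → R) :
    det (((1 : Matrix n n R).updateRow a x).updateRow b y) = x a * y b - x b * y a := by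
  let U : Matrix n (Fin 2) R := (1 : Matrix n n R).submatrix id ![a, b]
  let V : Matrix (Fin 2) n R := of ![x - Pi.single a 1, y - Pi.single b 1]
  have hUV : ((1 : Matrix n n R).updateRow a x).updateRow b y = 1 + U * V := by
    ext i k
    by_cases hib : i = b
    · subst hib
      simp [U, V, mul_apply, Fin.sum_univ_two, one_apply, hab.symm, Pi.single_apply, eq_comm]
    by_cases hia : i = a
    · subst hia
      simp [U, V, mul_apply, Fin.sum_univ_two, one_apply, hab, Pi.single_apply, eq_comm]
    · simp [U, V, mul_apply, Fin.sum_univ_two, one_apply, hia, hib]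
  have hVU (s t : Fin 2) : (V * U) s t = V s (![a, b] t) := by
    simp [U, mul_apply, one_apply]
  rw [hUV, det_one_add_mul_comm, det_fin_two]
  simp only [add_apply, hVU]
  simp [V, hab, hab.symm]

theorem det_mul_adjugate_minor (A : Matrix n n R) {a b : n} (hab : a ≠ b) :
    det A * (adjugate A a a * adjugate A b b - adjugate A a b * adjugate A b a) =
      det A ^ 2 * det ((A.updateRow a (Pi.single a 1)).updateRow b (Pi.single b 1)) := by
  have hrow (i : n) : adjugate A i ᵥ* A = det A • Pi.single i 1 := by
    change (adjugate A * A) i = _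
    ext k
    simp [adjugate_mul, one_apply, Pi.single_apply, eq_comm]
  calc det A * (adjugate A a a * adjugate A b b - adjugate A a b * adjugate A b a)
      = det (((1 : Matrix n n R).updateRow a (adjugate A a)).updateRow b (adjugate A b)) *
          det A := by
        rw [det_updateRow_updateRow_one hab]; ring
    _ = det ((A.updateRow a (det A • Pi.single a 1)).updateRow b (det A • Pi.single b 1)) := by
        rw [← det_mul, updateRow_mul, updateRow_mul, Matrix.one_mul, hrow, hrow]
    _ = _ := by
        rw [det_updateRow_smul, updateRow_comm _ hab, det_updateRow_smul, updateRow_comm _ hab.symm]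
        ring

theorem det_updateRow_single_self {m : ℕ} (M : Matrix (Fin (m + 1)) (Fin (m + 1)) R)
    (i : Fin (m + 1)) :
    det (M.updateRow i (Pi.single i 1)) = det (M.submatrix i.succAbove i.succAbove) := by
  rw [← adjugate_apply, adjugate_fin_succ_eq_det_submatrix, ← two_mul, pow_mul, neg_one_sq,
    one_pow, one_mul]

theorem det_updateRow_single_zero_last {m : ℕ} (A : Matrix (Fin (m + 2)) (Fin (m + 2)) R) :
    det ((A.updateRow 0 (Pi.single 0 1)).updateRow (Fin.last _) (Pi.single (Fin.last _) 1)) =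
      det (A.submatrix (Fin.succ ∘ Fin.castSucc) (Fin.succ ∘ Fin.castSucc)) := by
  have hrestrict : (A.updateRow 0 (Pi.single 0 1)).submatrix Fin.castSucc Fin.castSucc =
      (A.submatrix Fin.castSucc Fin.castSucc).updateRow 0 (Pi.single 0 1) := by
    ext i k
    simp [updateRow_apply, Pi.single_apply]
  rw [det_updateRow_single_self, Fin.succAbove_last, hrestrict, det_updateRow_single_self]
  rfl

theorem det_mul_desnanot_jacobi {m : ℕ} (A : Matrix (Fin (m + 2)) (Fin (m + 2)) R) :
    det A * (det (A.submatrix Fin.succ Fin.succ) * det (A.submatrix Fin.castSucc Fin.castSucc) -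
        det (A.submatrix Fin.castSucc Fin.succ) * det (A.submatrix Fin.succ Fin.castSucc)) =
      det A * (det A * det (A.submatrix (Fin.succ ∘ Fin.castSucc) (Fin.succ ∘ Fin.castSucc))) := by
  have h := det_mul_adjugate_minor A (Fin.last_pos.ne : (0 : Fin (m + 2)) ≠ Fin.last _)
  rw [det_updateRow_single_zero_last] at h
  simp only [adjugate_fin_succ_eq_det_submatrix, Fin.succAbove_zero, Fin.succAbove_last,
    Fin.val_zero, Fin.val_last, add_zero, zero_add, pow_zero, one_mul] at h
  have hsign : (-1 : R) ^ (m + 1 + (m + 1)) = 1 := Even.neg_one_pow ⟨_, rfl⟩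
  rw [hsign, one_mul, mul_mul_mul_comm, ← pow_add, hsign, one_mul] at h
  linear_combination h

theorem desnanot_jacobi {m : ℕ} (A : Matrix (Fin (m + 2)) (Fin (m + 2)) R) :
    det (A.submatrix Fin.succ Fin.succ) * det (A.submatrix Fin.castSucc Fin.castSucc) -
        det (A.submatrix Fin.castSucc Fin.succ) * det (A.submatrix Fin.succ Fin.castSucc) =
      det A * det (A.submatrix (Fin.succ ∘ Fin.castSucc) (Fin.succ ∘ Fin.castSucc)) := by
  -- `det A` may be a zero divisor: cancel instead the monic determinant of the generic matrix
  -- `X • 1 + A`, then specialize `X` to `0`.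
  set B : Matrix (Fin (m + 2)) (Fin (m + 2)) R[X] := (X : R[X]) • 1 + A.map C
  have hB : B.map (evalRingHom (0 : R)) = A := by
    ext i k
    by_cases h : i = k <;> simp [B, h]
  have hmonic : (det B).Monic := leadingCoeff_det_X_one_add_C A
  have hcancel := hmonic.isRegular.left (det_mul_desnanot_jacobi B)
  have hmap := congrArg (evalRingHom (0 : R)) hcancel
  simpa only [map_sub, map_mul, RingHom.map_det, RingHom.mapMatrix_apply, ← submatrix_map,
    hB] using hmap

end Matrix

open Matrix

section

variable (u : ℕ → ℝ) (j : ℕ)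

noncomputable def kMatrix (m : ℕ) : Matrix (Fin m) (Fin m) ℝ :=
  of fun i k => if (i : ℕ) = 0 then 1 else u (j + ((i : ℕ) - 1) + k)

theorem det_kMatrix (m : ℕ) : det (kMatrix u j m) = Kdet u j m := rfl

theorem det_kMatrix_submatrix_castSucc_castSucc (m : ℕ) :
    det ((kMatrix u j (m + 1)).submatrix Fin.castSucc Fin.castSucc) = Kdet u j m := rfl

theorem det_kMatrix_submatrix_succ_castSucc (m : ℕ) :
    det ((kMatrix u j (m + 1)).submatrix Fin.succ Fin.castSucc) = hankel u j m := rfl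

theorem det_kMatrix_submatrix_castSucc_succ (m : ℕ) :
    det ((kMatrix u j (m + 1)).submatrix Fin.castSucc Fin.succ) = Kdet u (j + 1) m := by
  congr 1
  ext i k
  by_cases hi : (i : ℕ) = 0
  · simp only [kMatrix, submatrix_apply, of_apply, Fin.val_castSucc, hi, if_true]
  · simp only [kMatrix, submatrix_apply, of_apply, Fin.val_castSucc, Fin.val_succ, if_neg hi]
    congr 1
    omega

theorem det_kMatrix_submatrix_succ_succ (m : ℕ) :
    det ((kMatrix u j (m + 1)).submatrix Fin.succ Fin.succ) = hankel u (j + 1) m := by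
  congr 1
  ext i k
  simp only [kMatrix, submatrix_apply, of_apply, Fin.val_succ, Nat.add_one_ne_zero, if_false]
  congr 1
  omega

theorem det_kMatrix_submatrix_succ_comp_castSucc (m : ℕ) :
    det ((kMatrix u j (m + 2)).submatrix (Fin.succ ∘ Fin.castSucc) (Fin.succ ∘ Fin.castSucc)) =
      hankel u (j + 1) m :=
  det_kMatrix_submatrix_succ_succ u j m

end

theorem stmt_6 (u : ℕ → ℝ) (j n : ℕ) (hn : 1 ≤ n) :
    Kdet u j (n + 1) * hankel u (j + 1) (n - 1) =
      hankel u (j + 1) n * Kdet u j n - hankel u j n * Kdet u (j + 1) n := by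
  obtain ⟨m, rfl⟩ : ∃ m, n = m + 1 := ⟨n - 1, by omega⟩
  have h := desnanot_jacobi (kMatrix u j (m + 2))
  rw [det_kMatrix_submatrix_succ_succ, det_kMatrix_submatrix_castSucc_castSucc,
    det_kMatrix_submatrix_castSucc_succ, det_kMatrix_submatrix_succ_castSucc,
    det_kMatrix_submatrix_succ_comp_castSucc, det_kMatrix] at h
  rw [Nat.add_sub_cancel]
  linear_combination -h
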